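/- Let n : ℝ → S² ⊂ ℝ³ and N : ℝ → S² be smooth curves with n = g N for a smooth curve g in SO₃ satisfying g' = a_ω g, and suppose g N' = n' and |n'(t)| ≠ 0. If the spherical geodesic curvatures k of n and K of N are defined by γ'' ≡ k_γ [γ, γ'] mod (γ, γ') in arc-length parametrization, then K(t) = k(t) − |ω(t)|/|ṅ(t)|, where ṅ is the derivative with respect to the common parameter t. -/

import Mathlib

/-!
Differentiating the rolling relation `n' = g N'` gives `n'' = ω × n' + g N''`, and `ω = |ω| n`.
A rotation preserves lengths and cross products, so `|N'| = |n'|` and the `n × n'`-component of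
`g N''` is `K |n'|`; hence the `n × n'`-component of `n''` is `K |n'| + |ω|`, which must equal
`k |n'|`. Components along `n × n'` are read off by a dot product: this vector is orthogonal to
`n` and `n'`, and nonzero because `n' ⊥ n` on the sphere.
-/

open Matrix
attribute [local instance] Matrix.linftyOpNormedAddCommGroup Matrix.linftyOpNormedSpace

/-- The matrix `a_ω` of the map `x ↦ ω × x`. -/
def hatMap (u : Fin 3 → ℝ) : Matrix (Fin 3) (Fin 3) ℝ :=
  !![0, -u 2, u 1; u 2, 0, -u 0; -u 1, u 0, 0]

/-- Euclidean norm of a vector in `ℝ³`. -/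
noncomputable def norm3 (u : Fin 3 → ℝ) : ℝ :=
  Real.sqrt (u 0 ^ 2 + u 1 ^ 2 + u 2 ^ 2)

theorem norm3_eq_sqrt_dotProduct (u : Fin 3 → ℝ) : norm3 u = Real.sqrt (u ⬝ᵥ u) := by
  simp only [norm3, dotProduct, Fin.sum_univ_three, sq]

theorem norm3_eq_zero_iff {u : Fin 3 → ℝ} : norm3 u = 0 ↔ u = 0 := by
  rw [norm3_eq_sqrt_dotProduct, Real.sqrt_eq_zero (by simpa using dotProduct_self_star_nonneg u),
    dotProduct_self_eq_zero]

theorem norm3_smul_inv_norm3_smul (u : Fin 3 → ℝ) : norm3 u • (norm3 u)⁻¹ • u = u := by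
  rcases eq_or_ne (norm3 u) 0 with h | h
  · rw [norm3_eq_zero_iff.mp h, smul_zero, smul_zero]
  · rw [smul_inv_smul₀ h]

theorem hatMap_mulVec (u v : Fin 3 → ℝ) : hatMap u *ᵥ v = u ⨯₃ v := by
  ext i
  fin_cases i <;> simp [hatMap, cross_apply, mulVec, dotProduct, Fin.sum_univ_three] <;> ring

theorem crossProduct_mulVec {R : Type*} [CommRing R] (A : Matrix (Fin 3) (Fin 3) R)
    (u v : Fin 3 → R) : (A *ᵥ u) ⨯₃ (A *ᵥ v) = (adjugate A)ᵀ *ᵥ (u ⨯₃ v) := by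
  ext i
  fin_cases i <;>
    simp [adjugate_fin_three, cross_apply, mulVec, dotProduct, Fin.sum_univ_three] <;> ring

theorem adjugate_eq_transpose_of_mul_transpose_eq_one {R : Type*} [CommRing R]
    {n : Type*} [Fintype n] [DecidableEq n] {A : Matrix n n R}
    (horth : A * Aᵀ = 1) (hdet : A.det = 1) : adjugate A = Aᵀ := by
  have hadj : A * adjugate A = 1 := by rw [mul_adjugate, hdet, one_smul]
  calc adjugate A = Aᵀ * A * adjugate A := by rw [mul_eq_one_comm.mp horth, Matrix.one_mul]
    _ = Aᵀ := by rw [Matrix.mul_assoc, hadj, Matrix.mul_one]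

theorem mulVec_crossProduct_of_mul_transpose_eq_one {R : Type*} [CommRing R]
    {A : Matrix (Fin 3) (Fin 3) R} (horth : A * Aᵀ = 1) (hdet : A.det = 1) (u v : Fin 3 → R) :
    A *ᵥ (u ⨯₃ v) = (A *ᵥ u) ⨯₃ (A *ᵥ v) := by
  rw [crossProduct_mulVec, adjugate_eq_transpose_of_mul_transpose_eq_one horth hdet,
    transpose_transpose]

theorem dotProduct_mulVec_mulVec_of_mul_transpose_eq_one {R : Type*} [CommRing R]
    {n : Type*} [Fintype n] [DecidableEq n] {A : Matrix n n R} (horth : A * Aᵀ = 1)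
    (u v : n → R) :
    (A *ᵥ u) ⬝ᵥ (A *ᵥ v) = u ⬝ᵥ v := by
  rw [dotProduct_mulVec, ← vecMul_transpose, vecMul_vecMul, mul_eq_one_comm.mp horth, vecMul_one]

theorem norm3_mulVec_of_mul_transpose_eq_one {A : Matrix (Fin 3) (Fin 3) ℝ}
    (horth : A * Aᵀ = 1) (u : Fin 3 → ℝ) : norm3 (A *ᵥ u) = norm3 u := by
  rw [norm3_eq_sqrt_dotProduct, norm3_eq_sqrt_dotProduct,
    dotProduct_mulVec_mulVec_of_mul_transpose_eq_one horth]

theorem crossProduct_ne_zero_of_dotProduct_eq_zero {u v : Fin 3 → ℝ} (hu : u ≠ 0) (hv : v ≠ 0)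
    (huv : u ⬝ᵥ v = 0) : u ⨯₃ v ≠ 0 := by
  intro h
  have := cross_dot_cross u v u v
  rw [h, zero_dotProduct, huv, dotProduct_comm v u, huv, mul_zero, sub_zero, eq_comm,
    mul_eq_zero, dotProduct_self_eq_zero, dotProduct_self_eq_zero] at this
  tauto

theorem crossProduct_coeff_eq {u v : Fin 3 → ℝ} (h : u ⨯₃ v ≠ 0) {a b c a' b' c' : ℝ}
    (heq : a • u + b • v + c • u ⨯₃ v = a' • u + b' • v + c' • u ⨯₃ v) : c = c' := by
  have hdot := congrArg (· ⬝ᵥ u ⨯₃ v) heq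
  simp only [add_dotProduct, smul_dotProduct, smul_eq_mul, dot_self_cross, dot_cross_self,
    mul_zero, zero_add] at hdot
  exact mul_right_cancel₀ (mt dotProduct_self_eq_zero.mp h) hdot

theorem HasDerivAt.matrix_mulVec {m n : Type*} [Fintype m] [Fintype n]
    {g : ℝ → Matrix m n ℝ} {v : ℝ → n → ℝ} {g' : Matrix m n ℝ} {v' : n → ℝ} {t : ℝ}
    (hg : HasDerivAt g g' t) (hv : HasDerivAt v v' t) :
    HasDerivAt (fun s => g s *ᵥ v s) (g t *ᵥ v' + g' *ᵥ v t) t :=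
  (mulVecBilin ℝ ℝ : Matrix m n ℝ →ₗ[ℝ] (n → ℝ) →ₗ[ℝ] m → ℝ).toContinuousBilinearMap
    |>.hasDerivAt_of_bilinear (fun _ => hg) (fun _ => hv)

theorem HasDerivAt.dotProduct {n : Type*} [Fintype n]
    {u v : ℝ → n → ℝ} {u' v' : n → ℝ} {t : ℝ}
    (hu : HasDerivAt u u' t) (hv : HasDerivAt v v' t) :
    HasDerivAt (fun s => u s ⬝ᵥ v s) (u t ⬝ᵥ v' + u' ⬝ᵥ v t) t :=
  (dotProductBilin ℝ ℝ : (n → ℝ) →ₗ[ℝ] (n → ℝ) →ₗ[ℝ] ℝ).toContinuousBilinearMap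
    |>.hasDerivAt_of_bilinear (fun _ => hu) (fun _ => hv)

theorem dotProduct_deriv_eq_zero_of_dotProduct_self_const {n : Type*} [Fintype n]
    {u : ℝ → n → ℝ} {u' : n → ℝ} {t c : ℝ} (hc : ∀ s, u s ⬝ᵥ u s = c)
    (hu : HasDerivAt u u' t) : u t ⬝ᵥ u' = 0 := by
  have hderiv := hu.dotProduct hu
  simp only [hc, dotProduct_comm u'] at hderiv
  linarith [(hasDerivAt_const t c).unique hderiv]

theorem stmt_16_general (g : ℝ → Matrix (Fin 3) (Fin 3) ℝ)
    (ω n N n' N' n'' N'' : ℝ → Fin 3 → ℝ) (k K : ℝ → ℝ)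
    (horth : ∀ t, g t * (g t)ᵀ = 1) (hdet : ∀ t, (g t).det = 1)
    (hg : ∀ t, HasDerivAt g (hatMap (ω t) * g t) t)
    (hsphere : ∀ t, norm3 (n t) = 1)
    (hn : ∀ t, n t = (norm3 (ω t))⁻¹ • ω t)
    (hroll : ∀ t, (g t).mulVec (N t) = n t)
    (hrollv : ∀ t, (g t).mulVec (N' t) = n' t)
    (hn' : ∀ t, HasDerivAt n (n' t) t)
    (hn'' : ∀ t, HasDerivAt n' (n'' t) t)
    (hN'' : ∀ t, HasDerivAt N' (N'' t) t)
    (hreg : ∀ t, norm3 (n' t) ≠ 0)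
    (hk : ∀ t, ∃ α β : ℝ, n'' t =
      α • n t + β • n' t + (k t * norm3 (n' t)) • crossProduct (n t) (n' t))
    (hK : ∀ t, ∃ α β : ℝ, N'' t =
      α • N t + β • N' t + (K t * norm3 (N' t)) • crossProduct (N t) (N' t)) :
    ∀ t, K t = k t - norm3 (ω t) / norm3 (n' t) := by
  intro t
  have hunit : ∀ s, n s ⬝ᵥ n s = 1 := fun s => by
    rw [← Real.sqrt_eq_one, ← norm3_eq_sqrt_dotProduct, hsphere]
  have hcross : n t ⨯₃ n' t ≠ 0 :=
    crossProduct_ne_zero_of_dotProduct_eq_zero (fun h => by simpa [h] using hunit t)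
      (mt norm3_eq_zero_iff.mpr (hreg t))
      (dotProduct_deriv_eq_zero_of_dotProduct_self_const hunit (hn' t))
  have hn''_eq : n'' t = g t *ᵥ N'' t + ω t ⨯₃ n' t := by
    have hderiv := (hg t).matrix_mulVec (hN'' t)
    simp only [hrollv, ← mulVec_mulVec, hatMap_mulVec] at hderiv
    exact (hn'' t).unique hderiv
  have hω : ω t ⨯₃ n' t = norm3 (ω t) • n t ⨯₃ n' t := by
    conv_lhs => rw [← norm3_smul_inv_norm3_smul (ω t), ← hn t]
    rw [map_smul, LinearMap.smul_apply]
  obtain ⟨α, β, hKt⟩ := hK t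
  have hgN'' : g t *ᵥ N'' t = α • n t + β • n' t + (K t * norm3 (n' t)) • n t ⨯₃ n' t := by
    rw [hKt, mulVec_add, mulVec_add, mulVec_smul, mulVec_smul, mulVec_smul,
      mulVec_crossProduct_of_mul_transpose_eq_one (horth t) (hdet t), hroll, hrollv,
      ← norm3_mulVec_of_mul_transpose_eq_one (horth t), hrollv]
  obtain ⟨α', β', hkt⟩ := hk t
  have hcoeff : k t * norm3 (n' t) = K t * norm3 (n' t) + norm3 (ω t) := by
    refine crossProduct_coeff_eq hcross (a := α') (b := β') (a' := α) (b' := β) ?_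
    rw [← hkt, hn''_eq, hgN'', hω, add_smul, ← add_assoc]
  field_simp [hreg t]
  linarith

/-- Relation between the spherical geodesic curvatures of the rolling curves:
`K = k − |ω|/|ṅ|`. The curvature of a spherical curve `γ` is encoded by
`γ̈ ≡ k·|γ̇|·(γ × γ̇) mod (γ, γ̇)`. -/
theorem stmt_16 (g : ℝ → Matrix (Fin 3) (Fin 3) ℝ)
    (ω n N n' N' n'' N'' : ℝ → Fin 3 → ℝ) (k K : ℝ → ℝ)
    (horth : ∀ t, g t * (g t)ᵀ = 1) (hdet : ∀ t, (g t).det = 1)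
    (hg : ∀ t, HasDerivAt g (hatMap (ω t) * g t) t)
    (hsphere : ∀ t, norm3 (n t) = 1)
    (hn : ∀ t, n t = (norm3 (ω t))⁻¹ • ω t)
    (hroll : ∀ t, (g t).mulVec (N t) = n t)
    (hrollv : ∀ t, (g t).mulVec (N' t) = n' t)
    (hn' : ∀ t, HasDerivAt n (n' t) t)
    (hn'' : ∀ t, HasDerivAt n' (n'' t) t)
    (hN' : ∀ t, HasDerivAt N (N' t) t)
    (hN'' : ∀ t, HasDerivAt N' (N'' t) t)
    (hreg : ∀ t, norm3 (n' t) ≠ 0)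
    (hk : ∀ t, ∃ α β : ℝ, n'' t =
      α • n t + β • n' t + (k t * norm3 (n' t)) • crossProduct (n t) (n' t))
    (hK : ∀ t, ∃ α β : ℝ, N'' t =
      α • N t + β • N' t + (K t * norm3 (N' t)) • crossProduct (N t) (N' t)) :
    ∀ t, K t = k t - norm3 (ω t) / norm3 (n' t) :=
  stmt_16_general g ω n N n' N' n'' N'' k K horth hdet hg hsphere hn hroll hrollv hn' hn'' hN'' hreg
    hk hK
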